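/- Let σ be a K-linear automorphism and τ a K-linear autoequivalence of 𝒞ₙ with στ = τσ, and let s = {σ,τ} be the σ-continuity factor. Then s is the unique nonzero scalar such that for every object i and all nonzero morphisms f : i → σ(i) and g : i → τ(i), one has σ(g) ∘ f = s·(τ(f) ∘ g) as morphisms i → στ(i) = τσ(i). -/

import Mathlib

open CategoryTheory

/-- The category `𝒞ₙ`: objects are `Fin n`, every hom-space is the one-dimensional
`K`-vector space `K`, and composition is multiplication in `K` (so the identity of
every object is `1 : K`). -/
def Cn (K : Type) (n : ℕ) : Type := Fin n

section CnSetup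

variable {K : Type} [Field K] {n : ℕ}

instance : Category (Cn K n) where
  Hom _ _ := K
  id _ := (1 : K)
  comp f g := @HMul.hMul K K K _ f g
  id_comp f := @one_mul K _ f
  comp_id f := @mul_one K _ f
  assoc f g h := @mul_assoc K _ f g h

instance : Preadditive (Cn K n) where
  homGroup _ _ := inferInstanceAs (AddCommGroup K)
  add_comp _ _ _ f f' g := @add_mul K _ _ _ f f' g
  comp_add _ _ _ f g g' := @mul_add K _ _ _ f g g'

instance : CategoryTheory.Linear K (Cn K n) where
  homModule _ _ := inferInstanceAs (Module K K)
  smul_comp _ _ _ r f g := @smul_mul_assoc K K _ _ _ r f g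
  comp_smul _ _ _ f r g := @mul_smul_comm K K _ _ _ r f g

/-- The morphism `X ⟶ Y` of `𝒞ₙ` given by the scalar `r`.  In particular
`CnHom j i 1` is the canonical basic morphism `x_{ij} : j ⟶ i`. -/
def CnHom (X Y : Cn K n) (r : K) : X ⟶ Y := r

/-- The scalar underlying a morphism of `𝒞ₙ`. -/
def toK {X Y : Cn K n} (f : X ⟶ Y) : K := f

end CnSetup

/-- A functor between `K`-linear categories is `K`-linear if it is additive on hom-spaces
and commutes with the action of `K` on hom-spaces. -/
def IsKLinearFunctor (K : Type) [Field K] {C D : Type*} [Category C] [Category D]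
    [Preadditive C] [Preadditive D] [CategoryTheory.Linear K C] [CategoryTheory.Linear K D]
    (F : C ⥤ D) : Prop :=
  (∀ (X Y : C) (f g : X ⟶ Y), F.map (f + g) = F.map f + F.map g) ∧
  (∀ (X Y : C) (r : K) (f : X ⟶ Y), F.map (r • f) = r • F.map f)


section AuxCn

variable {K : Type} [Field K] {n : ℕ}

lemma toK_comp {X Y Z : Cn K n} (f : X ⟶ Y) (g : Y ⟶ Z) :
    toK (f ≫ g) = toK f * toK g := rfl

lemma toK_smul {X Y : Cn K n} (r : K) (f : X ⟶ Y) :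
    toK (r • f) = r * toK f := rfl

lemma toK_id (X : Cn K n) : toK (𝟙 X) = 1 := rfl

lemma toK_zero {X Y : Cn K n} : toK (0 : X ⟶ Y) = 0 := rfl

lemma toK_CnHom (X Y : Cn K n) (r : K) : toK (CnHom X Y r) = r := rfl

lemma hom_ext' {X Y : Cn K n} {f g : X ⟶ Y} (h : toK f = toK g) : f = g := h

lemma toK_eqToHom {X Y : Cn K n} (h : X = Y) : toK (eqToHom h) = 1 := by
  subst h; rfl

lemma CnHom_ne_zero (X Y : Cn K n) : CnHom X Y 1 ≠ 0 := by
  intro h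
  exact one_ne_zero (congrArg toK h)

lemma hom_decomp {X Y : Cn K n} (f : X ⟶ Y) : f = toK f • CnHom X Y 1 := by
  apply hom_ext'
  rw [toK_smul, toK_CnHom, mul_one]

lemma CnHom_comp (X Y Z : Cn K n) :
    CnHom X Y 1 ≫ CnHom Y Z 1 = CnHom X Z 1 := by
  apply hom_ext'
  rw [toK_comp, toK_CnHom, toK_CnHom, toK_CnHom, one_mul]

/-- Scalar form of a `K`-linear endofunctor of `𝒞ₙ`. -/
lemma map_toK (F : Cn K n ⥤ Cn K n) (hF : IsKLinearFunctor K F) {X Y : Cn K n}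
    (f : X ⟶ Y) :
    toK (F.map f) = toK f * toK (F.map (CnHom X Y 1)) := by
  conv_lhs => rw [hom_decomp f]
  rw [hF.2 X Y (toK f) (CnHom X Y 1), toK_smul]

lemma map_mul' (F : Cn K n ⥤ Cn K n) (X Y Z : Cn K n) :
    toK (F.map (CnHom X Y 1)) * toK (F.map (CnHom Y Z 1))
      = toK (F.map (CnHom X Z 1)) := by
  rw [← toK_comp, ← F.map_comp, CnHom_comp]

lemma map_zero' (F : Cn K n ⥤ Cn K n) (hF : IsKLinearFunctor K F) (X Y : Cn K n) :
    F.map (0 : X ⟶ Y) = 0 := by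
  have h := hF.2 X Y 0 (CnHom X Y 1)
  rwa [zero_smul, zero_smul] at h

/-- An isomorphism of objects of `𝒞ₙ` from a nonzero scalar. -/
def scalarIso (X Y : Cn K n) (r : K) (hr : r ≠ 0) : X ≅ Y where
  hom := CnHom X Y r
  inv := CnHom Y X r⁻¹
  hom_inv_id := hom_ext' (by
    rw [toK_comp, toK_CnHom, toK_CnHom, toK_id]
    exact mul_inv_cancel₀ hr)
  inv_hom_id := hom_ext' (by
    rw [toK_comp, toK_CnHom, toK_CnHom, toK_id]
    exact inv_mul_cancel₀ hr)

/-- A natural isomorphism between endofunctors of `𝒞ₙ` from scalar components. -/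
def mkNatIso (F G : Cn K n ⥤ Cn K n) (c : Cn K n → K) (hc : ∀ X, c X ≠ 0)
    (hnat : ∀ (X Y : Cn K n) (f : X ⟶ Y),
      F.map f ≫ CnHom (F.obj Y) (G.obj Y) (c Y)
        = CnHom (F.obj X) (G.obj X) (c X) ≫ G.map f) : F ≅ G :=
  NatIso.ofComponents (fun X => scalarIso (F.obj X) (G.obj X) (c X) (hc X))
    (fun {X Y} f => hnat X Y f)

lemma mkNatIso_app (F G : Cn K n ⥤ Cn K n) (c : Cn K n → K) (hc : ∀ X, c X ≠ 0)
    (hnat : ∀ (X Y : Cn K n) (f : X ⟶ Y),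
      F.map f ≫ CnHom (F.obj Y) (G.obj Y) (c Y)
        = CnHom (F.obj X) (G.obj X) (c X) ≫ G.map f) (X : Cn K n) :
    toK ((mkNatIso F G c hc hnat).hom.app X) = c X := rfl

end AuxCn

/-- **Proposition (characterization of the continuity factor).**  The `σ`-continuity factor
`s = {σ,τ}` is the unique nonzero scalar such that `σ(g) ∘ f = s • (τ(f) ∘ g)` for every
object `i` and all nonzero morphisms `f : i ⟶ σ(i)`, `g : i ⟶ τ(i)`. -/
theorem stmt7 (K : Type) [Field K] (n : ℕ) (hn : 0 < n)
    (σ τ : Cn K n ⥤ Cn K n)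
    (hσl : IsKLinearFunctor K σ) (hτl : IsKLinearFunctor K τ)
    (hσa : ∃ σ' : Cn K n ⥤ Cn K n, σ ⋙ σ' = 𝟭 (Cn K n) ∧ σ' ⋙ σ = 𝟭 (Cn K n))
    (hτe : τ.IsEquivalence)
    (hcomm : σ ⋙ τ = τ ⋙ σ)
    (s : K) (hs : s ≠ 0)
    (hsfac : ∀ (φ : σ ≅ τ) (i : Cn K n),
      toK (σ.map (φ.hom.app i)) = s * toK (φ.hom.app (σ.obj i))) :
    (∀ (i : Cn K n) (f : i ⟶ σ.obj i) (g : i ⟶ τ.obj i), f ≠ 0 → g ≠ 0 →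
      toK (f ≫ σ.map g) = s * toK (g ≫ τ.map f)) ∧
    (∀ s' : K, s' ≠ 0 →
      (∀ (i : Cn K n) (f : i ⟶ σ.obj i) (g : i ⟶ τ.obj i), f ≠ 0 → g ≠ 0 →
        toK (f ≫ σ.map g) = s' * toK (g ≫ τ.map f)) → s' = s) := by
  classical
  -- base object
  set i₀ : Cn K n := ⟨0, hn⟩ with hi₀
  -- scalar matrices of σ and τ
  set A : Cn K n → Cn K n → K := fun X Y => toK (σ.map (CnHom X Y 1)) with hA
  set B : Cn K n → Cn K n → K := fun X Y => toK (τ.map (CnHom X Y 1)) with hB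
  have hAmul : ∀ X Y Z : Cn K n, A X Y * A Y Z = A X Z := fun X Y Z => map_mul' σ X Y Z
  have hBmul : ∀ X Y Z : Cn K n, B X Y * B Y Z = B X Z := fun X Y Z => map_mul' τ X Y Z
  have hAmap : ∀ (X Y : Cn K n) (f : X ⟶ Y), toK (σ.map f) = toK f * A X Y :=
    fun X Y f => map_toK σ hσl f
  have hBmap : ∀ (X Y : Cn K n) (f : X ⟶ Y), toK (τ.map f) = toK f * B X Y :=
    fun X Y f => map_toK τ hτl f
  -- σ is injective on morphisms
  obtain ⟨σ', hσ'1, hσ'2⟩ := hσa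
  have hσinj : ∀ (X Y : Cn K n) (f g : X ⟶ Y), σ.map f = σ.map g → f = g := by
    intro X Y f g hfg
    have h1 := Functor.congr_hom hσ'1 f
    have h2 := Functor.congr_hom hσ'1 g
    have e1 : toK (σ'.map (σ.map f)) = toK f := by
      rw [show σ'.map (σ.map f) = (σ ⋙ σ').map f from rfl, h1]
      simp [toK_comp, toK_eqToHom]
    have e2 : toK (σ'.map (σ.map g)) = toK g := by
      rw [show σ'.map (σ.map g) = (σ ⋙ σ').map g from rfl, h2]
      simp [toK_comp, toK_eqToHom]
    apply hom_ext'
    rw [← e1, ← e2, hfg]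
  haveI : τ.IsEquivalence := hτe
  have hτinj : ∀ (X Y : Cn K n) (f g : X ⟶ Y), τ.map f = τ.map g → f = g :=
    fun X Y f g h => τ.map_injective h
  have hA0 : ∀ X Y : Cn K n, A X Y ≠ 0 := by
    intro X Y h
    have : σ.map (CnHom X Y 1) = 0 := hom_ext' (by rw [toK_zero]; exact h)
    rw [← map_zero' σ hσl X Y] at this
    exact CnHom_ne_zero X Y (hσinj X Y _ _ this)
  have hB0 : ∀ X Y : Cn K n, B X Y ≠ 0 := by
    intro X Y h
    have : τ.map (CnHom X Y 1) = 0 := hom_ext' (by rw [toK_zero]; exact h)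
    rw [← map_zero' τ hτl X Y] at this
    exact CnHom_ne_zero X Y (hτinj X Y _ _ this)
  -- components of the natural isomorphism σ ≅ τ
  set c : Cn K n → K := fun X => B i₀ X / A i₀ X with hc
  have hc0 : ∀ X, c X ≠ 0 := fun X => div_ne_zero (hB0 i₀ X) (hA0 i₀ X)
  have hAdiv : ∀ X Y : Cn K n, A X Y = A i₀ Y / A i₀ X := by
    intro X Y
    rw [eq_div_iff (hA0 i₀ X)]
    linear_combination hAmul i₀ X Y
  have hBdiv : ∀ X Y : Cn K n, B X Y = B i₀ Y / B i₀ X := by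
    intro X Y
    rw [eq_div_iff (hB0 i₀ X)]
    linear_combination hBmul i₀ X Y
  have hnat : ∀ (X Y : Cn K n) (f : X ⟶ Y),
      σ.map f ≫ CnHom (σ.obj Y) (τ.obj Y) (c Y)
        = CnHom (σ.obj X) (τ.obj X) (c X) ≫ τ.map f := by
    intro X Y f
    apply hom_ext'
    rw [toK_comp, toK_comp, toK_CnHom, toK_CnHom, hAmap, hBmap]
    simp only [hc]
    rw [hAdiv X Y, hBdiv X Y]
    field_simp [hA0 i₀ X, hA0 i₀ Y, hB0 i₀ X, hB0 i₀ Y]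
  have hkey : ∀ i : Cn K n, A i (τ.obj i) = s * B i (σ.obj i) := by
    intro i
    have hfac := hsfac (mkNatIso σ τ c hc0 hnat) i
    rw [mkNatIso_app, hAmap] at hfac
    rw [mkNatIso_app] at hfac
    simp only [hc] at hfac
    rw [hAdiv (σ.obj i) (τ.obj i)] at hfac
    rw [hAdiv i (τ.obj i), hBdiv i (σ.obj i)]
    have hp := hA0 i₀ i
    have hq := hA0 i₀ (σ.obj i)
    have hP := hB0 i₀ i
    have hQ := hB0 i₀ (σ.obj i)
    field_simp at hfac ⊢
    have hfac2 : B i₀ i * A i₀ (τ.obj i) = s * B i₀ (σ.obj i) * A i₀ i :=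
      by linear_combination hfac
    linear_combination hfac2
  constructor
  · intro i f g hf hg
    rw [toK_comp, toK_comp, hAmap, hBmap, hkey i]
    ring
  · intro s' hs' h
    have h1 := h i₀ (CnHom i₀ (σ.obj i₀) 1) (CnHom i₀ (τ.obj i₀) 1)
      (CnHom_ne_zero _ _) (CnHom_ne_zero _ _)
    rw [toK_comp, toK_comp, toK_CnHom, toK_CnHom, hAmap, hBmap, toK_CnHom, toK_CnHom,
      hkey i₀] at h1
    have hB0' := hB0 i₀ (σ.obj i₀)
    field_simp at h1
    rw [h1]
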